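/- arXiv:2602.17574 — 4 statements merged into one kernel-verified Lean document; each statement's English description precedes it below -/
import Mathlib

section
/- For hybrid zonotopes Z1, Z2 and a matrix R of appropriate dimensions, the generalized intersection Z1 ∩_R Z2 = {z ∈ Z1 : R z ∈ Z2} is exactly the hybrid zonotope with continuous generators [G_{c1} 0], binary generators [G_{b1} 0], center c1, continuous constraints [[A_{c1},0],[0,A_{c2}],[R G_{c1}, −G_{c2}]], binary constraints [[A_{b1},0],[0,A_{b2}],[R G_{b1}, −G_{b2}]], and constraint vector [b1; b2; c2 − R c1]. -/
open Matrix Set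

/-- A hybrid zonotope `⟨Gc, Gb, c, Ac, Ab, b⟩` (canonical form), with generator/constraint
index types allowed to be arbitrary finite types so that block constructions are convenient. -/
def HZ {n ic ib ieq : Type*} [Fintype ic] [Fintype ib] [Fintype ieq]
    (Gc : Matrix n ic ℝ) (Gb : Matrix n ib ℝ) (c : n → ℝ)
    (Ac : Matrix ieq ic ℝ) (Ab : Matrix ieq ib ℝ) (b : ieq → ℝ) : Set (n → ℝ) :=
  {z | ∃ ξc : ic → ℝ, ∃ ξb : ib → ℝ,
    (∀ i, ξc i ∈ Set.Icc (-1:ℝ) 1) ∧ (∀ i, ξb i = -1 ∨ ξb i = 1) ∧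
    Ac.mulVec ξc + Ab.mulVec ξb = b ∧ z = Gc.mulVec ξc + Gb.mulVec ξb + c}


lemma fcMulVec {m n₁ n₂ : Type*} [Fintype n₁] [Fintype n₂]
    (A : Matrix m n₁ ℝ) (B : Matrix m n₂ ℝ) (v : n₁ ⊕ n₂ → ℝ) :
    (Matrix.fromCols A B).mulVec v = A.mulVec (v ∘ Sum.inl) + B.mulVec (v ∘ Sum.inr) := by
  conv_lhs => rw [← Sum.elim_comp_inl_inr v]
  rw [Matrix.fromCols_mulVec_sumElim]

/-- The generalized intersection `Z₁ ∩_R Z₂ = {z ∈ Z₁ : Rz ∈ Z₂}` of two hybrid zonotopes is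
exactly the hybrid zonotope with continuous generators `[G_{c1} 0]`, binary generators
`[G_{b1} 0]`, center `c₁`, continuous constraints `[[A_{c1},0],[0,A_{c2}],[R G_{c1}, −G_{c2}]]`,
binary constraints `[[A_{b1},0],[0,A_{b2}],[R G_{b1}, −G_{b2}]]`, and constraint vector
`[b₁; b₂; c₂ − R c₁]`. -/
theorem hz_generalized_intersection {n m ic1 ib1 ieq1 ic2 ib2 ieq2 : ℕ}
    (Gc1 : Matrix (Fin n) (Fin ic1) ℝ) (Gb1 : Matrix (Fin n) (Fin ib1) ℝ) (c1 : Fin n → ℝ)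
    (Ac1 : Matrix (Fin ieq1) (Fin ic1) ℝ) (Ab1 : Matrix (Fin ieq1) (Fin ib1) ℝ) (b1 : Fin ieq1 → ℝ)
    (Gc2 : Matrix (Fin m) (Fin ic2) ℝ) (Gb2 : Matrix (Fin m) (Fin ib2) ℝ) (c2 : Fin m → ℝ)
    (Ac2 : Matrix (Fin ieq2) (Fin ic2) ℝ) (Ab2 : Matrix (Fin ieq2) (Fin ib2) ℝ) (b2 : Fin ieq2 → ℝ)
    (R : Matrix (Fin m) (Fin n) ℝ) :
    {z ∈ HZ Gc1 Gb1 c1 Ac1 Ab1 b1 | R.mulVec z ∈ HZ Gc2 Gb2 c2 Ac2 Ab2 b2}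
    = HZ (Matrix.fromCols Gc1 (0 : Matrix (Fin n) (Fin ic2) ℝ))
        (Matrix.fromCols Gb1 (0 : Matrix (Fin n) (Fin ib2) ℝ)) c1
        (Matrix.fromRows
          (Matrix.fromRows (Matrix.fromCols Ac1 0) (Matrix.fromCols 0 Ac2))
          (Matrix.fromCols (R * Gc1) (-Gc2)))
        (Matrix.fromRows
          (Matrix.fromRows (Matrix.fromCols Ab1 0) (Matrix.fromCols 0 Ab2))
          (Matrix.fromCols (R * Gb1) (-Gb2)))
        (Sum.elim (Sum.elim b1 b2) (c2 - R.mulVec c1)) := by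
  ext z
  simp only [Set.mem_setOf_eq, HZ]
  constructor
  · rintro ⟨⟨ξc1, ξb1, hc1, hb1, heq1, hz1⟩, ξc2, ξb2, hc2, hb2, heq2, hz2⟩
    refine ⟨Sum.elim ξc1 ξc2, Sum.elim ξb1 ξb2, ?_, ?_, ?_, ?_⟩
    · rintro (i | i); exacts [hc1 i, hc2 i]
    · rintro (i | i); exacts [hb1 i, hb2 i]
    · funext i
      rcases i with (i | i) | i <;>
        simp only [Matrix.fromRows_mulVec, fcMulVec, Sum.elim_inl, Sum.elim_inr,
          Sum.elim_comp_inl, Sum.elim_comp_inr, Pi.add_apply, Matrix.zero_mulVec,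
          add_zero, zero_add, Pi.zero_apply, Matrix.neg_mulVec, Pi.neg_apply,
          Pi.sub_apply, ← Matrix.mulVec_mulVec]
      · exact congrFun heq1 i
      · exact congrFun heq2 i
      · have h : R.mulVec z = R.mulVec (Gc1.mulVec ξc1) + R.mulVec (Gb1.mulVec ξb1)
            + R.mulVec c1 := by
          rw [hz1]; simp [Matrix.mulVec_add]
        rw [hz2] at h
        have h2 := congrFun h i
        simp only [Pi.add_apply] at h2
        linarith
    · rw [hz1, fcMulVec, fcMulVec]
      simp
  · rintro ⟨ξc, ξb, hc, hb, heq, hz⟩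
    simp only [Matrix.fromRows_mulVec, fcMulVec] at heq
    have heqTL := fun i => congrFun heq (Sum.inl (Sum.inl i))
    have heqTR := fun i => congrFun heq (Sum.inl (Sum.inr i))
    have heqB := fun i => congrFun heq (Sum.inr i)
    simp only [Sum.elim_inl, Sum.elim_inr, Pi.add_apply, Matrix.zero_mulVec,
      Pi.zero_apply, add_zero, zero_add, Matrix.neg_mulVec, Pi.neg_apply,
      Pi.sub_apply, ← Matrix.mulVec_mulVec] at heqTL heqTR heqB
    have hz1 : z = Gc1.mulVec (ξc ∘ Sum.inl) + Gb1.mulVec (ξb ∘ Sum.inl) + c1 := by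
      rw [hz, fcMulVec, fcMulVec]; simp
    refine ⟨⟨ξc ∘ Sum.inl, ξb ∘ Sum.inl, fun i => hc _, fun i => hb _,
        funext fun i => by simpa using heqTL i, hz1⟩,
      ξc ∘ Sum.inr, ξb ∘ Sum.inr, fun i => hc _, fun i => hb _,
        funext fun i => by simpa using heqTR i, ?_⟩
    funext i
    have h2 : R.mulVec z = R.mulVec (Gc1.mulVec (ξc ∘ Sum.inl))
        + R.mulVec (Gb1.mulVec (ξb ∘ Sum.inl)) + R.mulVec c1 := by
      rw [hz1]; simp [Matrix.mulVec_add]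
    have h3 := congrFun h2 i
    have h4 := heqB i
    simp only [Pi.add_apply] at h3 ⊢
    linarith
end

section
/- The Minkowski sum of two sharp hybrid zonotopes is sharp: if CR(Z1) = conv(Z1) and CR(Z2) = conv(Z2), then the hybrid zonotope Z1 ⊕ Z2 (formed by concatenating generators and block-diagonal constraints) satisfies CR(Z1 ⊕ Z2) = conv(Z1 ⊕ Z2). -/
open Matrix Set Pointwise

/-- The convex relaxation of a hybrid zonotope. -/
def CRset {n ic ib ieq : Type*} [Fintype ic] [Fintype ib] [Fintype ieq]
    (Gc : Matrix n ic ℝ) (Gb : Matrix n ib ℝ) (c : n → ℝ)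
    (Ac : Matrix ieq ic ℝ) (Ab : Matrix ieq ib ℝ) (b : ieq → ℝ) : Set (n → ℝ) :=
  {z | ∃ ξc : ic → ℝ, ∃ ξb : ib → ℝ,
    (∀ i, ξc i ∈ Set.Icc (-1:ℝ) 1) ∧ (∀ i, ξb i ∈ Set.Icc (-1:ℝ) 1) ∧
    Ac.mulVec ξc + Ab.mulVec ξb = b ∧ z = Gc.mulVec ξc + Gb.mulVec ξb + c}

/-- The Minkowski sum of two sharp hybrid zonotopes is sharp: if `CR(Z₁) = conv(Z₁)` and
`CR(Z₂) = conv(Z₂)`, then the hybrid zonotope `Z₁ ⊕ Z₂`, formed by concatenating the generator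
matrices and block-diagonally stacking the constraint matrices, satisfies
`CR(Z₁ ⊕ Z₂) = conv(Z₁ ⊕ Z₂)`. -/
theorem hz_minkowski_sum_preserves_sharpness {n ic1 ib1 ieq1 ic2 ib2 ieq2 : ℕ}
    (Gc1 : Matrix (Fin n) (Fin ic1) ℝ) (Gb1 : Matrix (Fin n) (Fin ib1) ℝ) (c1 : Fin n → ℝ)
    (Ac1 : Matrix (Fin ieq1) (Fin ic1) ℝ) (Ab1 : Matrix (Fin ieq1) (Fin ib1) ℝ) (b1 : Fin ieq1 → ℝ)
    (Gc2 : Matrix (Fin n) (Fin ic2) ℝ) (Gb2 : Matrix (Fin n) (Fin ib2) ℝ) (c2 : Fin n → ℝ)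
    (Ac2 : Matrix (Fin ieq2) (Fin ic2) ℝ) (Ab2 : Matrix (Fin ieq2) (Fin ib2) ℝ) (b2 : Fin ieq2 → ℝ)
    (hsharp1 : CRset Gc1 Gb1 c1 Ac1 Ab1 b1 = convexHull ℝ (HZ Gc1 Gb1 c1 Ac1 Ab1 b1))
    (hsharp2 : CRset Gc2 Gb2 c2 Ac2 Ab2 b2 = convexHull ℝ (HZ Gc2 Gb2 c2 Ac2 Ab2 b2)) :
    CRset (Matrix.fromCols Gc1 Gc2) (Matrix.fromCols Gb1 Gb2) (c1 + c2)
        (Matrix.fromBlocks Ac1 0 0 Ac2) (Matrix.fromBlocks Ab1 0 0 Ab2) (Sum.elim b1 b2)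
      = convexHull ℝ (HZ Gc1 Gb1 c1 Ac1 Ab1 b1 + HZ Gc2 Gb2 c2 Ac2 Ab2 b2) := by
  have hCR : CRset (Matrix.fromCols Gc1 Gc2) (Matrix.fromCols Gb1 Gb2) (c1 + c2)
        (Matrix.fromBlocks Ac1 0 0 Ac2) (Matrix.fromBlocks Ab1 0 0 Ab2) (Sum.elim b1 b2)
      = CRset Gc1 Gb1 c1 Ac1 Ab1 b1 + CRset Gc2 Gb2 c2 Ac2 Ab2 b2 := by
    ext z
    constructor
    · rintro ⟨ξc, ξb, hc, hb, hA, rfl⟩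
      have hξc : ξc = Sum.elim (ξc ∘ Sum.inl) (ξc ∘ Sum.inr) := by
        funext i; cases i <;> rfl
      have hξb : ξb = Sum.elim (ξb ∘ Sum.inl) (ξb ∘ Sum.inr) := by
        funext i; cases i <;> rfl
      rw [hξc, hξb] at hA
      simp only [Matrix.fromBlocks_mulVec, Matrix.zero_mulVec, add_zero, zero_add] at hA
      rw [Set.mem_add]
      refine ⟨_, ⟨ξc ∘ Sum.inl, ξb ∘ Sum.inl, fun i => hc _, fun i => hb _,
          ?_, rfl⟩,
        _, ⟨ξc ∘ Sum.inr, ξb ∘ Sum.inr, fun i => hc _, fun i => hb _, ?_, rfl⟩, ?_⟩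
      · funext i
        simpa using congrFun hA (Sum.inl i)
      · funext i
        simpa using congrFun hA (Sum.inr i)
      · rw [hξc, hξb, Matrix.fromCols_mulVec_sumElim, Matrix.fromCols_mulVec_sumElim]
        simp only [Sum.elim_comp_inl, Sum.elim_comp_inr]
        abel
    · rw [Set.mem_add]
      rintro ⟨x, ⟨ξc1, ξb1, hc1, hb1, hA1, rfl⟩, y, ⟨ξc2, ξb2, hc2, hb2, hA2, rfl⟩, rfl⟩
      refine ⟨Sum.elim ξc1 ξc2, Sum.elim ξb1 ξb2,
        fun i => by cases i <;> simp [hc1, hc2],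
        fun i => by cases i <;> simp [hb1, hb2], ?_, ?_⟩
      · simp only [Matrix.fromBlocks_mulVec, Matrix.zero_mulVec, add_zero, zero_add]
        funext i
        cases i with
        | inl i => simpa using congrFun hA1 i
        | inr i => simpa using congrFun hA2 i
      · rw [Matrix.fromCols_mulVec_sumElim, Matrix.fromCols_mulVec_sumElim]
        abel
  rw [hCR, hsharp1, hsharp2, convexHull_add]
end

section
/- Lifted reachability recursion preserves trajectory feasibility: let Z_k ⊆ R^{(k)(nx+nu)+nx} be a set of feasible trajectory prefixes (x_0, u_0, …, x_k) satisfying x_0 ∈ X_0, and for each j < k: x_j ∈ S_j, u_j ∈ U_j, x_{j+1} ∈ Suc({x_j},{u_j}) ∩ F_{j+1}. Let Ψ̃_k = {(x,u,x⁺) : (x,u) ∈ (⋃_i (SU)^i_k), x⁺ = f_k(x,u)} ∩_{[0 0 I]} F_{k+1} be the state-constrained graph of function. Then Z_{k+1} := (Z_k × Ū × S̄) ∩_{[0 … 0 I]} Ψ̃_k, where the intersection matrix selects the last nx+nu+nx coordinates and Ū ⊇ U_k, S̄ ⊇ S_{k+1}, is a set of feasible trajectory prefixes of length k+1. -/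
open Set

/-- The lifted reachability recursion preserves trajectory feasibility: if every element of
`Z_k` is a feasible trajectory prefix `(x₀,u₀,…,x_k)` (i.e. `x₀ ∈ X₀` and for each `j < k`:
`x_j ∈ S_j`, `u_j ∈ U_j`, `x_{j+1} ∈ Suc({x_j},{u_j}) ∩ F_{j+1}`), and
`Ψ̃_k = {(x,u,x⁺) : (x,u) ∈ S_k × U_k, x⁺ ∈ Suc({x},{u})} ∩_{[0 0 I]} F_{k+1}` is the
state-constrained graph of function, then every element of
`Z_{k+1} = (Z_k × Ū × S̄) ∩_{[0 … 0 I]} Ψ̃_k` (with `Ū ⊇ U_k`, `S̄ ⊇ S_{k+1}`) is a feasible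
trajectory prefix of length `k+1`. -/
theorem lifted_recursion_preserves_feasibility {σ υ : Type*}
    (X0 : Set σ) (S F : ℕ → Set σ) (U : ℕ → Set υ)
    (Suc : ℕ → σ → υ → Set σ) (Sbar : Set σ) (Ubar : Set υ) (k : ℕ)
    (Zk : Set ((Fin (k+1) → σ) × (Fin k → υ)))
    (hZk : ∀ p ∈ Zk, p.1 0 ∈ X0 ∧ ∀ j : Fin k,
        p.1 j.castSucc ∈ S j ∧ p.2 j ∈ U j ∧
        p.1 j.succ ∈ Suc j (p.1 j.castSucc) (p.2 j) ∩ F (j + 1))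
    (hU : U k ⊆ Ubar) (hS : S (k+1) ⊆ Sbar)
    (Psi : Set (σ × υ × σ))
    (hPsi : Psi = {t : σ × υ × σ | (t.1, t.2.1) ∈ S k ×ˢ U k ∧
        t.2.2 ∈ Suc k t.1 t.2.1 ∧ t.2.2 ∈ F (k+1)}) :
    ∀ p : (Fin (k+2) → σ) × (Fin (k+1) → υ),
      ((Fin.init p.1, Fin.init p.2) ∈ Zk ∧
        p.2 (Fin.last k) ∈ Ubar ∧ p.1 (Fin.last (k+1)) ∈ Sbar ∧
        (p.1 (Fin.castSucc (Fin.last k)), p.2 (Fin.last k), p.1 (Fin.last (k+1))) ∈ Psi) →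
      (p.1 0 ∈ X0 ∧ ∀ j : Fin (k+1),
        p.1 j.castSucc ∈ S j ∧ p.2 j ∈ U j ∧
        p.1 j.succ ∈ Suc j (p.1 j.castSucc) (p.2 j) ∩ F (j + 1)) := by
  rintro p ⟨hmem, -, -, hlast⟩
  subst hPsi
  obtain ⟨h0, hstep⟩ := hZk _ hmem
  obtain ⟨⟨hSk, hUk⟩, hsuc, hF⟩ := hlast
  refine ⟨by simpa [Fin.init] using h0, fun j => ?_⟩
  induction j using Fin.lastCases with
  | last =>
    simp only [Fin.succ_last]
    exact ⟨hSk, hUk, hsuc, hF⟩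
  | cast i =>
    have h := hstep i
    simp only [Fin.init, Fin.castSucc, Fin.castAdd, Fin.castLE, Fin.succ] at h ⊢
    convert h using 3
end

section
/- The zonotope union identity with a shared generator matrix is correct: let Z_i = {G_i ξ + c_i : ξ ∈ [0,1]^{n_{G,i}}}, i = 1,…,N, be zonotopes in 01-form whose generator columns all come from a shared list g̃_1, …, g̃_m, with incidence matrix M (M_{ji} = 1 iff g̃_j is a column of G_i) and Ñ_j the number of sets containing g̃_j. Then the hybrid zonotope Z = ⟨[G̃ 0], C, 0, [I Ñ; 0ᵀ 0ᵀ], [−M; 1ᵀ], [0; 1]⟩ in 01-form, where C = [c_1 … c_N] and Ñ = diag(Ñ_1,…,Ñ_m), satisfies Z = ⋃_{i=1}^N Z_i. -/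
open Matrix Set

/-- The zonotope union identity with a shared generator matrix is correct: let
`Zᵢ = {G̃ ξ + cᵢ : 0 ≤ ξⱼ ≤ M_{ji}}` be 01-form zonotopes whose generator columns come from the
shared matrix `G̃`, selected by the 0/1 incidence matrix `M` (`M_{ji} = 1` iff shared generator
`g̃ⱼ` is a column of `Gᵢ`), and let `Ñⱼ = ∑ᵢ M_{ji}`. Then the hybrid zonotope
`⟨[G̃ 0], C, 0, [I Ñ; 0ᵀ 0ᵀ], [−M; 1ᵀ], [0; 1]⟩` in 01-form — i.e. factors
`ξ, s ∈ [0,1]^m`, selectors `ξ_b ∈ {0,1}^N`, constraints `ξⱼ + Ñⱼ sⱼ = (M ξ_b)ⱼ` and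
`∑ᵢ (ξ_b)ᵢ = 1`, image `G̃ ξ + C ξ_b` — equals `⋃ᵢ Zᵢ`. -/
theorem zonotope_union_shared_generators {n m N : ℕ}
    (Gt : Matrix (Fin n) (Fin m) ℝ) (c : Fin N → Fin n → ℝ)
    (M : Matrix (Fin m) (Fin N) ℝ) (hM : ∀ j i, M j i = 0 ∨ M j i = 1) :
    {z : Fin n → ℝ | ∃ (ξ s : Fin m → ℝ) (ξb : Fin N → ℝ),
        (∀ j, ξ j ∈ Icc (0:ℝ) 1) ∧ (∀ j, s j ∈ Icc (0:ℝ) 1) ∧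
        (∀ i, ξb i = 0 ∨ ξb i = 1) ∧
        (∀ j, ξ j + (∑ i, M j i) * s j = M.mulVec ξb j) ∧
        (∑ i, ξb i) = 1 ∧
        z = Gt.mulVec ξ + ∑ i, ξb i • c i}
    = ⋃ i, {z | ∃ ξ : Fin m → ℝ, (∀ j, 0 ≤ ξ j ∧ ξ j ≤ M j i) ∧ z = Gt.mulVec ξ + c i} := by
  have hM0 : ∀ j i, (0:ℝ) ≤ M j i := by
    intro j i; rcases hM j i with h | h <;> simp [h]
  have hM1 : ∀ j i, M j i ≤ 1 := by
    intro j i; rcases hM j i with h | h <;> simp [h]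
  ext z
  simp only [Set.mem_setOf_eq, Set.mem_iUnion]
  constructor
  · rintro ⟨ξ, s, ξb, hξ, hs, hb, hcon, hsum, rfl⟩
    obtain ⟨i₀, hi₀⟩ : ∃ i₀, ξb i₀ = 1 := by
      by_contra h
      push_neg at h
      have : ∀ i, ξb i = 0 := fun i => (hb i).resolve_right (h i)
      simp [this] at hsum
    have hzero : ∀ i, i ≠ i₀ → ξb i = 0 := by
      intro i hi
      have hrest : ∑ k ∈ Finset.univ.erase i₀, ξb k = 0 := by
        have h1 := Finset.add_sum_erase Finset.univ ξb (Finset.mem_univ i₀)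
        rw [hsum] at h1
        linarith [h1, hi₀]
      have := (Finset.sum_eq_zero_iff_of_nonneg (fun k _ => by
        rcases hb k with h | h <;> simp [h])).mp hrest
      exact this i (Finset.mem_erase.mpr ⟨hi, Finset.mem_univ i⟩)
    have hmul : ∀ j, M.mulVec ξb j = M j i₀ := by
      intro j
      rw [Matrix.mulVec, dotProduct]
      rw [Finset.sum_eq_single i₀]
      · rw [hi₀, mul_one]
      · intro k _ hk; rw [hzero k hk, mul_zero]
      · intro h; exact absurd (Finset.mem_univ i₀) h
    have hc : ∑ i, ξb i • c i = c i₀ := by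
      rw [Finset.sum_eq_single i₀]
      · rw [hi₀, one_smul]
      · intro k _ hk; rw [hzero k hk, zero_smul]
      · intro h; exact absurd (Finset.mem_univ i₀) h
    refine ⟨i₀, ξ, fun j => ⟨(hξ j).1, ?_⟩, by rw [hc]⟩
    have h1 := hcon j
    rw [hmul j] at h1
    have hN : (0:ℝ) ≤ ∑ i, M j i := Finset.sum_nonneg (fun i _ => hM0 j i)
    nlinarith [(hs j).1, mul_nonneg hN (hs j).1]
  · rintro ⟨i₀, ξ, hξ, rfl⟩
    refine ⟨ξ, fun j => if (∑ i, M j i) = 0 then 0 else (M j i₀ - ξ j)/(∑ i, M j i),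
      fun i => if i = i₀ then 1 else 0, ?_, ?_, ?_, ?_, ?_, ?_⟩
    · intro j
      exact ⟨(hξ j).1, le_trans (hξ j).2 (hM1 j i₀)⟩
    · intro j
      by_cases h : (∑ i, M j i) = 0
      · simp [h]
      · have hN : (0:ℝ) < ∑ i, M j i :=
          lt_of_le_of_ne (Finset.sum_nonneg (fun i _ => hM0 j i)) (Ne.symm h)
        have hle : M j i₀ ≤ ∑ i, M j i :=
          Finset.single_le_sum (fun i _ => hM0 j i) (Finset.mem_univ i₀)
        simp only [h, if_false]
        constructor
        · exact div_nonneg (by linarith [(hξ j).2]) hN.le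
        · rw [div_le_one hN]; linarith [(hξ j).1]
    · intro i; by_cases h : i = i₀ <;> simp [h]
    · intro j
      have hmul : M.mulVec (fun i => if i = i₀ then (1:ℝ) else 0) j = M j i₀ := by
        rw [Matrix.mulVec, dotProduct]
        rw [Finset.sum_eq_single i₀] <;> simp +contextual
      rw [hmul]
      by_cases h : (∑ i, M j i) = 0
      · have hall : ∀ i, M j i = 0 := by
          intro i
          have := (Finset.sum_eq_zero_iff_of_nonneg (fun i _ => hM0 j i)).mp h
          exact this i (Finset.mem_univ i)
        have hx : ξ j = 0 := le_antisymm (by rw [← hall i₀]; exact (hξ j).2) (hξ j).1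
        simp [h, hx, hall i₀]
      · simp only [h, if_false]
        field_simp
        ring
    · simp
    · congr 1
      rw [Finset.sum_eq_single i₀] <;> simp +contextual
end
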